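/- For matrices Θ, Θ̂₁, Θ̂₂ of the same size, the projected rank bound holds: rank(Pr_Θ[Θ̂₁ − Θ]) ≤ 2·rank(Θ), where Pr_Θ(B) = B − P_{S1(Θ)⊥} B P_{S2(Θ)⊥}. -/

import Mathlib

open scoped BigOperators

noncomputable def frob {m n : Type*} [Fintype m] [Fintype n] (A : Matrix m n ℝ) : ℝ :=
  Real.sqrt (∑ i, ∑ j, (A i j)^2)

noncomputable def opNorm {m n : Type*} [Fintype m] [Fintype n] [DecidableEq m] [DecidableEq n]
    (A : Matrix m n ℝ) : ℝ :=
  ‖LinearMap.toContinuousLinearMap (Matrix.toEuclideanLin A)‖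

noncomputable def nuclearNorm {m n : Type*} [Fintype m] [Fintype n] [DecidableEq n]
    (A : Matrix m n ℝ) : ℝ :=
  ∑ i, Real.sqrt ((show (A.transpose * A).IsHermitian by
    simpa [Matrix.conjTranspose_eq_transpose_of_trivial] using
      Matrix.isHermitian_conjTranspose_mul_self A).eigenvalues i)

noncomputable def colSpace {m n : Type*} [Fintype m] [Fintype n] [DecidableEq n]
    (A : Matrix m n ℝ) : Submodule ℝ (EuclideanSpace ℝ m) :=
  LinearMap.range (Matrix.toEuclideanLin A)

noncomputable def projMat {m : Type*} [Fintype m] [DecidableEq m]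
    (S : Submodule ℝ (EuclideanSpace ℝ m)) : Matrix m m ℝ :=
  Matrix.toEuclideanLin.symm (S.subtype ∘ₗ (S.orthogonalProjectionOnto).toLinearMap)

noncomputable def PrPerp {m n : Type*} [Fintype m] [Fintype n] [DecidableEq m] [DecidableEq n]
    (A B : Matrix m n ℝ) : Matrix m n ℝ :=
  projMat (colSpace A).orthogonal * B * projMat (colSpace A.transpose).orthogonal

noncomputable def Pr {m n : Type*} [Fintype m] [Fintype n] [DecidableEq m] [DecidableEq n]
    (A B : Matrix m n ℝ) : Matrix m n ℝ :=
  B - PrPerp A B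

noncomputable def maxEig {k : Type*} [Fintype k] [DecidableEq k] (M : Matrix k k ℝ) : ℝ :=
  sSup (spectrum ℝ M)
noncomputable def minEig {k : Type*} [Fintype k] [DecidableEq k] (M : Matrix k k ℝ) : ℝ :=
  sInf (spectrum ℝ M)
noncomputable def condNum {k : Type*} [Fintype k] [DecidableEq k] (M : Matrix k k ℝ) : ℝ :=
  maxEig M / minEig M

/-! With `P`, `Q` the orthogonal projections onto the column and row spaces of `A`,
`Pr A B = B - (1 - P) B (1 - Q) = P B + (1 - P) B Q`. The first summand factors through `P`, the
second through `Q`, and both projections have rank `rank A`. -/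

open scoped Matrix

namespace Matrix

theorem rank_add_le {m n K : Type*} [Fintype n] [Field K] (A B : Matrix m n K) :
    (A + B).rank ≤ A.rank + B.rank := by
  have hrange : LinearMap.range (A + B).mulVecLin ≤
      LinearMap.range A.mulVecLin ⊔ LinearMap.range B.mulVecLin := by
    rintro _ ⟨v, rfl⟩
    exact Submodule.mem_sup.2 ⟨A *ᵥ v, ⟨v, rfl⟩, B *ᵥ v, ⟨v, rfl⟩, (add_mulVec A B v).symm⟩
  exact (Submodule.finrank_mono hrange).trans (Submodule.finrank_add_le_finrank_add_finrank _ _)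

theorem rank_eq_finrank_colSpace {m n : Type*} [Fintype m] [Fintype n] [DecidableEq n]
    (A : Matrix m n ℝ) : A.rank = Module.finrank ℝ (colSpace A) :=
  rank_eq_finrank_range_toLin A (PiLp.basisFun 2 ℝ m) (PiLp.basisFun 2 ℝ n)

end Matrix

section projMat

variable {m : Type*} [Fintype m] [DecidableEq m]

theorem toEuclideanLin_projMat (S : Submodule ℝ (EuclideanSpace ℝ m)) :
    Matrix.toEuclideanLin (projMat S) = S.starProjection.toLinearMap :=
  Matrix.toEuclideanLin.apply_symm_apply _

theorem rank_projMat (S : Submodule ℝ (EuclideanSpace ℝ m)) :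
    (projMat S).rank = Module.finrank ℝ S := by
  rw [Matrix.rank_eq_finrank_colSpace, colSpace, toEuclideanLin_projMat]
  exact congrArg (fun T : Submodule ℝ _ => Module.finrank ℝ T) S.range_starProjection

theorem projMat_orthogonal (S : Submodule ℝ (EuclideanSpace ℝ m)) :
    projMat Sᗮ = 1 - projMat S := by
  apply Matrix.toEuclideanLin.injective
  rw [map_sub, toEuclideanLin_projMat, toEuclideanLin_projMat, S.starProjection_orthogonal,
    Matrix.toLpLin_one]
  rfl

end projMat

section Pr

variable {m n : Type*} [Fintype m] [Fintype n] [DecidableEq m] [DecidableEq n]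

theorem rank_projMat_colSpace (A : Matrix m n ℝ) : (projMat (colSpace A)).rank = A.rank := by
  rw [rank_projMat, Matrix.rank_eq_finrank_colSpace]

theorem Pr_eq_projMat_mul_add (A B : Matrix m n ℝ) :
    Pr A B = projMat (colSpace A) * B + (1 - projMat (colSpace A)) * B * projMat (colSpace Aᵀ) := by
  simp only [Pr, PrPerp, projMat_orthogonal, Matrix.mul_sub, Matrix.sub_mul, Matrix.one_mul,
    Matrix.mul_one]
  abel

theorem rank_Pr_le (A B : Matrix m n ℝ) : (Pr A B).rank ≤ 2 * A.rank := by
  set P := projMat (colSpace A)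
  set Q := projMat (colSpace Aᵀ)
  calc (Pr A B).rank ≤ (P * B).rank + ((1 - P) * B * Q).rank := by
        rw [Pr_eq_projMat_mul_add]; exact Matrix.rank_add_le _ _
    _ ≤ P.rank + Q.rank := add_le_add (Matrix.rank_mul_le_left _ _) (Matrix.rank_mul_le_right _ _)
    _ = 2 * A.rank := by
        rw [rank_projMat_colSpace, rank_projMat_colSpace, A.rank_transpose, two_mul]

end Pr

theorem rank_proj_le_two_rank_general {p : ℕ}
    (Θ Θhat₁ : Matrix (Fin p) (Fin p) ℝ) :
    (Pr Θ (Θhat₁ - Θ)).rank ≤ 2 * Θ.rank :=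
  rank_Pr_le Θ (Θhat₁ - Θ)

/-- rank(Pr_Θ[Θ̂₁ − Θ]) ≤ 2·rank(Θ). -/
theorem rank_proj_le_two_rank {p : ℕ}
    (Θ Θhat₁ Θhat₂ : Matrix (Fin p) (Fin p) ℝ) :
    (Pr Θ (Θhat₁ - Θ)).rank ≤ 2 * Θ.rank :=
  rank_proj_le_two_rank_general Θ Θhat₁
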